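/- arXiv:1611.03187 — 5 statements merged into one kernel-verified Lean document; each statement's English description precedes it below -/
import Mathlib

section
/- Every grid square of a grid polyhedron P belongs to exactly two bands of P. -/
open scoped Classical

namespace StripFold

/-- A cell of the unit-cube grid (also used for integer grid points and vectors). -/
abbrev Cell : Type := Fin 3 → ℤ

/-- A grid square `(c, i)`: the common face of the unit cubes at cells `c` and `c + eᵢ`. -/
abbrev Sq : Type := Cell × Fin 3

/-- A grid edge `(p, d)`: the unit segment of the cube grid from `p` to `p + e_d`. -/
abbrev GridEdge : Type := Cell × Fin 3

/-- The standard unit vector `eᵢ`. -/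
def unitVec (i : Fin 3) : Cell := fun j => if j = i then 1 else 0

/-- The four grid edges lying on (the boundary of) a grid square. -/
def edgesOf (s : Sq) : Set GridEdge :=
  { e | ∃ j k : Fin 3, j ≠ s.2 ∧ k ≠ s.2 ∧ j ≠ k ∧ e.2 = j ∧
      e.1 s.2 = s.1 s.2 + 1 ∧ e.1 j = s.1 j ∧ (e.1 k = s.1 k ∨ e.1 k = s.1 k + 1) }

/-- The four grid vertices (corners) of a grid square. -/
def vertsOf (s : Sq) : Set Cell :=
  { q | q s.2 = s.1 s.2 + 1 ∧ ∀ j, j ≠ s.2 → (q j = s.1 j ∨ q j = s.1 j + 1) }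

/-- Two grid squares are edge-adjacent: they are distinct and share a grid edge. -/
def edgeAdj (s t : Sq) : Prop := s ≠ t ∧ (edgesOf s ∩ edgesOf t).Nonempty

lemma edgeAdj_symm {s t : Sq} (h : edgeAdj s t) : edgeAdj t s :=
  ⟨h.1.symm, by rw [Set.inter_comm]; exact h.2⟩

/-- The dual graph of a set of grid squares: vertices are the squares, edges join
edge-adjacent squares. -/
def dualGraph (S : Set Sq) : SimpleGraph S where
  Adj a b := edgeAdj a.1 b.1
  symm := ⟨fun _ _ h => edgeAdj_symm h⟩
  loopless := ⟨fun _ h => h.1 rfl⟩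

/-- A grid surface: a finite nonempty set of grid squares whose dual graph is connected. -/
structure IsGridSurface (S : Set Sq) : Prop where
  finite : S.Finite
  nonempty : S.Nonempty
  connected : (dualGraph S).Connected

/-- A milling tour of a grid surface: a closed walk in the dual graph visiting every
vertex at least once.  Its length is `w.length`. -/
def IsMillingTour {S : Set Sq} {v : S} (w : (dualGraph S).Walk v v) : Prop :=
  ∀ u : S, u ∈ w.support

/-- The boundary of a set `C` of unit cubes: the grid squares incident to exactly one
cube of `C`. -/
def boundary (C : Set Cell) : Set Sq :=
  { s | Xor' (s.1 ∈ C) (s.1 + unitVec s.2 ∈ C) }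

/-- All grid edges lying on squares of `P`. -/
def edgesOfSet (P : Set Sq) : Set GridEdge := ⋃ s ∈ P, edgesOf s

/-- All grid vertices lying on squares of `P`. -/
def vertsOfSet (P : Set Sq) : Set Cell := ⋃ s ∈ P, vertsOf s

/-- A grid polyhedron: `P` is the boundary of a finite nonempty set `C` of unit cubes,
`P` is a grid surface, every grid edge lying on a square of `P` lies on exactly two
squares of `P`, and `V - E + F = 2` (stated as `V + F = E + 2`). -/
structure IsGridPolyhedron (C : Set Cell) (P : Set Sq) : Prop where
  finC : C.Finite
  neC : C.Nonempty
  bdry : P = boundary C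
  surface : IsGridSurface P
  edgeTwo : ∀ e : GridEdge, (∃ s ∈ P, e ∈ edgesOf s) →
    { s | s ∈ P ∧ e ∈ edgesOf s }.ncard = 2
  euler : (vertsOfSet P).ncard + P.ncard = (edgesOfSet P).ncard + 2

/-- The squares of `P` that lie in the slab `x_a ∈ [x, x + 1]` and whose normal is
perpendicular to axis `a`. -/
def slabSquares (P : Set Sq) (a : Fin 3) (x : ℤ) : Set Sq :=
  { s | s ∈ P ∧ s.2 ≠ a ∧ s.1 a = x }

/-- `B` is a connected component, under edge-adjacency, of the set `T` of grid squares. -/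
def IsCompOf (B T : Set Sq) : Prop :=
  B.Nonempty ∧ B ⊆ T ∧ (dualGraph B).Connected ∧
    ∀ s ∈ B, ∀ t ∈ T, edgeAdj s t → t ∈ B

/-- A band of a grid polyhedron `P`: an `x`-, `y`-, or `z`-band, i.e. a connected
component under edge-adjacency of the squares of `P` lying in a single slab with
normal perpendicular to the slab axis. -/
def IsBand (P : Set Sq) (B : Set Sq) : Prop :=
  ∃ (a : Fin 3) (x : ℤ), IsCompOf B (slabSquares P a x)

/-- Two bands overlap: they are distinct and some grid square belongs to both. -/
def Overlaps (B B' : Set Sq) : Prop := B ≠ B' ∧ (B ∩ B').Nonempty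

/-- Two bands are adjacent: they do not overlap and some grid square of one is
edge-adjacent to some grid square of the other. -/
def BandAdjacent (B B' : Set Sq) : Prop :=
  ¬ Overlaps B B' ∧ ∃ g ∈ B, ∃ g' ∈ B', edgeAdj g g'

/-- A band cover of `P`: a set of bands of `P` covering every grid square of `P`. -/
def IsBandCover (P : Set Sq) (S : Set (Set Sq)) : Prop :=
  (∀ B ∈ S, IsBand P B) ∧ ∀ g ∈ P, ∃ B ∈ S, g ∈ B

/-- The band graph `G_P`: one vertex per band of `P`, an edge between two bands iff
they overlap. -/
def bandGraph (P : Set Sq) : SimpleGraph {B : Set Sq // IsBand P B} where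
  Adj B B' := Overlaps B.1 B'.1
  symm := ⟨fun _ _ h => ⟨h.1.symm, by rw [Set.inter_comm]; exact h.2⟩⟩
  loopless := ⟨fun _ h => h.1 rfl⟩

section Walks

variable {S : Set Sq} {v : S}

/-- The index of the previous position of a closed walk, cyclically. -/
def prevIdx (w : (dualGraph S).Walk v v) (k : ℕ) : ℕ := (k + w.length - 1) % w.length

/-- The index of the next position of a closed walk, cyclically. -/
def nextIdx (w : (dualGraph S).Walk v v) (k : ℕ) : ℕ := (k + 1) % w.length

/-- The grid square visited at position `k` of the walk. -/
def squareAt (w : (dualGraph S).Walk v v) (k : ℕ) : Sq := (w.getVert k).1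

/-- `e` is a side shared by grid squares `s` and `t`. -/
def sharedSide (s t : Sq) (e : GridEdge) : Prop := e ∈ edgesOf s ∧ e ∈ edgesOf t

/-- `e` is the side through which the visit at position `k` enters its grid square. -/
def EnterSide (w : (dualGraph S).Walk v v) (k : ℕ) (e : GridEdge) : Prop :=
  sharedSide (squareAt w (prevIdx w k)) (squareAt w k) e

/-- `e` is the side through which the visit at position `k` exits its grid square. -/
def ExitSide (w : (dualGraph S).Walk v v) (k : ℕ) (e : GridEdge) : Prop :=
  sharedSide (squareAt w k) (squareAt w (nextIdx w k)) e

/-- The visit at position `k` is straight: it enters and exits through opposite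
(distinct parallel) sides. -/
def StraightVisit (w : (dualGraph S).Walk v v) (k : ℕ) : Prop :=
  ∃ e₁ e₂, EnterSide w k e₁ ∧ ExitSide w k e₂ ∧ e₁ ≠ e₂ ∧ e₁.2 = e₂.2

/-- The visit at position `k` is a turn: it enters and exits through incident
(non-parallel) sides. -/
def TurnVisit (w : (dualGraph S).Walk v v) (k : ℕ) : Prop :=
  ∃ e₁ e₂, EnterSide w k e₁ ∧ ExitSide w k e₂ ∧ e₁.2 ≠ e₂.2

/-- The visit at position `k` is a U-turn: it enters and exits through the same side. -/
def UTurnVisit (w : (dualGraph S).Walk v v) (k : ℕ) : Prop :=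
  ∃ e, EnterSide w k e ∧ ExitSide w k e

/-- The number of turns of a closed walk: the number of visits that are turns or
U-turns. -/
noncomputable def turnCount (w : (dualGraph S).Walk v v) : ℕ :=
  {k | k < w.length ∧ (TurnVisit w k ∨ UTurnVisit w k)}.ncard

/-- The set of positions at which the walk visits the grid square `g`. -/
def visitsOf (w : (dualGraph S).Walk v v) (g : Sq) : Set ℕ :=
  {k | k < w.length ∧ squareAt w k = g}

/-- `g` is visited exactly at the two distinct positions `k₁` and `k₂`. -/
def JunctionAt (w : (dualGraph S).Walk v v) (g : Sq) (k₁ k₂ : ℕ) : Prop :=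
  k₁ ≠ k₂ ∧ visitsOf w g = {k₁, k₂}

/-- The four sides used by the two visits at positions `k₁, k₂` are `e₁, e₂, e₃, e₄`,
pairwise distinct (hence each of the four sides of the square is used exactly once). -/
def FourSides (w : (dualGraph S).Walk v v) (k₁ k₂ : ℕ) (e₁ e₂ e₃ e₄ : GridEdge) : Prop :=
  EnterSide w k₁ e₁ ∧ ExitSide w k₁ e₂ ∧ EnterSide w k₂ e₃ ∧ ExitSide w k₂ e₄ ∧
    e₁ ≠ e₂ ∧ e₁ ≠ e₃ ∧ e₁ ≠ e₄ ∧ e₂ ≠ e₃ ∧ e₂ ≠ e₄ ∧ e₃ ≠ e₄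

/-- `g` is a straight junction: visited exactly twice, each of its four sides used
exactly once, and both visits are straight. -/
def IsStraightJunction (w : (dualGraph S).Walk v v) (g : Sq) : Prop :=
  ∃ k₁ k₂, JunctionAt w g k₁ k₂ ∧ ∃ e₁ e₂ e₃ e₄, FourSides w k₁ k₂ e₁ e₂ e₃ e₄ ∧
    e₁.2 = e₂.2 ∧ e₃.2 = e₄.2

/-- `g` is a turn junction: visited exactly twice, each of its four sides used
exactly once, and both visits are turns. -/
def IsTurnJunction (w : (dualGraph S).Walk v v) (g : Sq) : Prop :=
  ∃ k₁ k₂, JunctionAt w g k₁ k₂ ∧ ∃ e₁ e₂ e₃ e₄, FourSides w k₁ k₂ e₁ e₂ e₃ e₄ ∧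
    e₁.2 ≠ e₂.2 ∧ e₃.2 ≠ e₄.2

end Walks

/-- The third coordinate axis, distinct from distinct axes `i` and `d`. -/
def thirdIdx (i d : Fin 3) : Fin 3 := ⟨(3 - (i.val + d.val)) % 3, Nat.mod_lt _ (by norm_num)⟩

/-- Cross product of integer vectors in 3-space. -/
def cross3 (u v : Cell) : Cell := fun i => u (i + 1) * v (i + 2) - u (i + 2) * v (i + 1)

/-- Dot product of integer vectors in 3-space. -/
def dot3 (u v : Cell) : ℤ := ∑ i : Fin 3, u i * v i

/-- The outward unit normal of the grid square `s` on the boundary of the cube set `C`: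
it points out of `C`. -/
noncomputable def outwardNormal (C : Set Cell) (s : Sq) : Cell :=
  if s.1 ∈ C then unitVec s.2 else -unitVec s.2

/-- The unit direction of travel when entering the grid square `g` through its side `e`:
in-plane, perpendicular to `e`, pointing from `e` into `g`. -/
def enterDir (g : Sq) (e : GridEdge) : Cell :=
  if e.1 (thirdIdx g.2 e.2) = g.1 (thirdIdx g.2 e.2) then unitVec (thirdIdx g.2 e.2)
  else -unitVec (thirdIdx g.2 e.2)

/-- The unit direction of travel when exiting the grid square `g` through its side `e`. -/
def exitDir (g : Sq) (e : GridEdge) : Cell := -enterDir g e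

section Turns

variable {S : Set Sq} {v : S}

/-- The visit at position `k` is a left turn: it enters with direction `u` and exits
with direction `v` through incident sides, with `(u × v) · n > 0` for the outward
normal `n`. -/
def IsLeftTurnVisit (C : Set Cell) (w : (dualGraph S).Walk v v) (k : ℕ) : Prop :=
  ∃ e₁ e₂, EnterSide w k e₁ ∧ ExitSide w k e₂ ∧ e₁.2 ≠ e₂.2 ∧
    0 < dot3 (cross3 (enterDir (squareAt w k) e₁) (exitDir (squareAt w k) e₂))
        (outwardNormal C (squareAt w k))

/-- The visit at position `k` is a right turn: `(u × v) · n < 0`. -/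
def IsRightTurnVisit (C : Set Cell) (w : (dualGraph S).Walk v v) (k : ℕ) : Prop :=
  ∃ e₁ e₂, EnterSide w k e₁ ∧ ExitSide w k e₂ ∧ e₁.2 ≠ e₂.2 ∧
    dot3 (cross3 (enterDir (squareAt w k) e₁) (exitDir (squareAt w k) e₂))
        (outwardNormal C (squareAt w k)) < 0

end Turns

/-- `k₁` and `k₂` are cyclically consecutive elements of the set `T` of positions:
no element of `T` lies strictly between them in cyclic order. -/
def CyclicallyConsecutive (T : Set ℕ) (k₁ k₂ : ℕ) : Prop :=
  k₁ ∈ T ∧ k₂ ∈ T ∧ k₁ ≠ k₂ ∧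
    ∀ j ∈ T, j ≠ k₁ → j ≠ k₂ →
      ¬ ((k₁ < j ∧ j < k₂) ∨ (k₂ < k₁ ∧ (k₁ < j ∨ j < k₂)))

/-! A band through a square `g` is a component of the squares of `P` in the `a`-slab through `g`,
for one of the two axes `a` of the plane of `g`, and for each such `a` the component of `g` is
unique. The two resulting bands differ because `g` has a neighbour across one of its edges that
lies in the first slab but not in the second. -/

def componentOf (T : Set Sq) (g : Sq) : Set Sq :=
  { t | ∃ (hg : g ∈ T) (ht : t ∈ T), (dualGraph T).Reachable ⟨g, hg⟩ ⟨t, ht⟩ }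

section Components

variable {B T : Set Sq}

lemma exists_reachable_of_walk_of_closed
    (hclosed : ∀ s ∈ B, ∀ t ∈ T, edgeAdj s t → t ∈ B) :
    ∀ {x y : T} (_ : (dualGraph T).Walk x y) (hx : x.1 ∈ B),
      ∃ hy : y.1 ∈ B, (dualGraph B).Reachable ⟨x.1, hx⟩ ⟨y.1, hy⟩ := by
  intro x y w
  induction w with
  | nil => exact fun hx => ⟨hx, .rfl⟩
  | @cons x z y hxz _ ih =>
    intro hx
    have hz : z.1 ∈ B := hclosed x.1 hx z.1 z.2 hxz
    obtain ⟨hy, hzy⟩ := ih hz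
    exact ⟨hy, (SimpleGraph.Adj.reachable (G := dualGraph B) (u := ⟨x.1, hx⟩) (v := ⟨z.1, hz⟩)
      hxz).trans hzy⟩

lemma reachable_of_subset (hBT : B ⊆ T) {s t : B} (h : (dualGraph B).Reachable s t) :
    (dualGraph T).Reachable (Set.inclusion hBT s) (Set.inclusion hBT t) :=
  h.map { toFun := Set.inclusion hBT, map_rel' := id }

lemma isCompOf_componentOf {g : Sq} (hg : g ∈ T) : IsCompOf (componentOf T g) T := by
  have hclosed : ∀ s ∈ componentOf T g, ∀ t ∈ T, edgeAdj s t → t ∈ componentOf T g :=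
    fun s ⟨_, hs, hgs⟩ t ht hst =>
      ⟨hg, ht, hgs.trans (SimpleGraph.Adj.reachable (G := dualGraph T) (u := ⟨s, hs⟩) hst)⟩
  have hgg : g ∈ componentOf T g := ⟨hg, hg, .rfl⟩
  have hreach : ∀ t : componentOf T g, (dualGraph (componentOf T g)).Reachable ⟨g, hgg⟩ t := by
    rintro ⟨t, ht⟩
    obtain ⟨_, _, ⟨w⟩⟩ := ht
    exact (exists_reachable_of_walk_of_closed hclosed w hgg).2
  have : Nonempty (componentOf T g) := ⟨⟨g, hgg⟩⟩
  exact ⟨⟨g, hgg⟩, fun t ⟨_, ht, _⟩ => ht,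
    ⟨fun s t => (hreach s).symm.trans (hreach t)⟩, hclosed⟩

lemma exists_isCompOf {g : Sq} (hg : g ∈ T) : ∃ B, IsCompOf B T ∧ g ∈ B :=
  ⟨componentOf T g, isCompOf_componentOf hg, hg, hg, .rfl⟩

lemma IsCompOf.subset_of_mem {B' : Set Sq} (hB : IsCompOf B T) (hB' : IsCompOf B' T) {g : Sq}
    (hgB : g ∈ B) (hgB' : g ∈ B') : B ⊆ B' := by
  intro t ht
  obtain ⟨w⟩ := reachable_of_subset hB.2.1 (hB.2.2.1.preconnected ⟨g, hgB⟩ ⟨t, ht⟩)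
  exact (exists_reachable_of_walk_of_closed hB'.2.2.2 w hgB').1

lemma IsCompOf.eq_of_mem {B' : Set Sq} (hB : IsCompOf B T) (hB' : IsCompOf B' T) {g : Sq}
    (hgB : g ∈ B) (hgB' : g ∈ B') : B = B' :=
  (hB.subset_of_mem hB' hgB hgB').antisymm (hB'.subset_of_mem hB hgB' hgB)

end Components

lemma isBand_and_mem_iff {P B : Set Sq} {g : Sq} :
    IsBand P B ∧ g ∈ B ↔ ∃ a, a ≠ g.2 ∧ IsCompOf B (slabSquares P a (g.1 a)) ∧ g ∈ B := by
  constructor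
  · rintro ⟨⟨a, x, hB⟩, hgB⟩
    obtain ⟨-, hga, rfl⟩ := hB.2.1 hgB
    exact ⟨a, Ne.symm hga, hB, hgB⟩
  · rintro ⟨a, -, hB, hgB⟩
    exact ⟨⟨a, _, hB⟩, hgB⟩

lemma IsGridPolyhedron.exists_ne_mem_edgesOf {C : Set Cell} {P : Set Sq}
    (hP : IsGridPolyhedron C P) {g : Sq} (hg : g ∈ P) {e : GridEdge} (he : e ∈ edgesOf g) :
    ∃ u ∈ P, u ≠ g ∧ e ∈ edgesOf u := by
  have htwo := hP.edgeTwo e ⟨g, hg, he⟩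
  by_contra! hnone
  have hsub : { s | s ∈ P ∧ e ∈ edgesOf s } ⊆ {g} := fun u ⟨hu, heu⟩ =>
    by_contra fun hug => hnone u hu hug heu
  have := (Set.ncard_le_ncard hsub (Set.finite_singleton g)).trans_eq (Set.ncard_singleton g)
  omega

lemma coords_of_mem_edgesOf {u : Sq} {e : GridEdge} (he : e ∈ edgesOf u) :
    u.2 ≠ e.2 ∧ u.1 e.2 = e.1 e.2 ∧ e.1 u.2 = u.1 u.2 + 1 := by
  obtain ⟨j, k, hj, -, -, rfl, hi, hej, -⟩ := he
  exact ⟨Ne.symm hj, hej.symm, hi⟩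

lemma fin3_eq_of_ne {a a' i t : Fin 3} :
    a ≠ a' → a ≠ i → a' ≠ i → t ≠ a → t ≠ a' → t = i := by
  omega

lemma fin3_cases {a a' i : Fin 3} :
    a ≠ a' → a ≠ i → a' ≠ i → ∀ m : Fin 3, m = a ∨ m = a' ∨ m = i := by
  omega

/-- The witness is the other square on the edge of `g` of direction `a` starting at the corner
`g.1 + e_{g.2}`: lying also in the `a'`-slab would force it to be `g` itself. -/
lemma exists_adj_mem_slab_not_mem_slab {C : Set Cell} {P : Set Sq} (hP : IsGridPolyhedron C P)
    {g : Sq} (hg : g ∈ P) {a a' : Fin 3} (haa' : a ≠ a') (ha : a ≠ g.2) (ha' : a' ≠ g.2) :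
    ∃ u ∈ slabSquares P a (g.1 a), edgeAdj g u ∧ u ∉ slabSquares P a' (g.1 a') := by
  set e : GridEdge := (Function.update g.1 g.2 (g.1 g.2 + 1), a)
  have he : e ∈ edgesOf g := by
    refine ⟨a, a', ha, ha', haa', rfl, ?_, ?_, Or.inl ?_⟩ <;> simp [e, ha, ha']
  obtain ⟨u, huP, hug, heu⟩ := hP.exists_ne_mem_edgesOf hg he
  obtain ⟨hua, hu_a, hu_i⟩ := coords_of_mem_edgesOf heu
  have hu_a : u.1 a = g.1 a := by
    simpa only [e, ne_eq, ha, not_false_eq_true, Function.update_of_ne] using hu_a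
  refine ⟨u, ⟨huP, hua, hu_a⟩, ⟨hug.symm, e, he, heu⟩, ?_⟩
  rintro ⟨-, hua', hu_a'⟩
  have hu2 : u.2 = g.2 := fin3_eq_of_ne haa' ha ha' hua hua'
  have hu_g2 : g.1 g.2 = u.1 g.2 := by
    rw [hu2] at hu_i
    simpa only [Function.update_self, add_left_inj, e] using hu_i
  refine hug (Prod.ext (funext fun m => ?_) hu2)
  rcases fin3_cases haa' ha ha' m with rfl | rfl | rfl
  exacts [hu_a, hu_a', hu_g2.symm]

lemma bands_ne {C : Set Cell} {P B B' : Set Sq} (hP : IsGridPolyhedron C P) {g : Sq} (hg : g ∈ P)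
    {a a' : Fin 3} (haa' : a ≠ a') (ha : a ≠ g.2) (ha' : a' ≠ g.2)
    (hB : IsCompOf B (slabSquares P a (g.1 a))) (hB' : IsCompOf B' (slabSquares P a' (g.1 a')))
    (hgB : g ∈ B) : B ≠ B' := by
  obtain ⟨u, hu, hgu, hu'⟩ := exists_adj_mem_slab_not_mem_slab hP hg haa' ha ha'
  rintro rfl
  exact hu' (hB'.2.1 (hB.2.2.2 g hgB u hu hgu))

/-- Every grid square of a grid polyhedron `P` belongs to exactly two
bands of `P`. -/
theorem square_mem_exactly_two_bands (C : Set Cell) (P : Set Sq)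
    (hP : IsGridPolyhedron C P) (g : Sq) (hg : g ∈ P) :
    {B : Set Sq | IsBand P B ∧ g ∈ B}.ncard = 2 := by
  have hslab : ∀ a, a ≠ g.2 → g ∈ slabSquares P a (g.1 a) := fun a ha => ⟨hg, ha.symm, rfl⟩
  have h₁ : g.2 + 1 ≠ g.2 := by omega
  have h₂ : g.2 + 2 ≠ g.2 := by omega
  have h₁₂ : g.2 + 1 ≠ g.2 + 2 := by omega
  obtain ⟨B₁, hB₁, hgB₁⟩ := exists_isCompOf (hslab _ h₁)
  obtain ⟨B₂, hB₂, hgB₂⟩ := exists_isCompOf (hslab _ h₂)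
  have hbands : {B : Set Sq | IsBand P B ∧ g ∈ B} = {B₁, B₂} := by
    ext B
    simp only [Set.mem_ofPred_eq, isBand_and_mem_iff, Set.mem_insert_iff, Set.mem_singleton_iff]
    constructor
    · rintro ⟨a, ha, hB, hgB⟩
      obtain rfl | rfl : a = g.2 + 1 ∨ a = g.2 + 2 := by omega
      exacts [Or.inl (hB.eq_of_mem hB₁ hgB hgB₁), Or.inr (hB.eq_of_mem hB₂ hgB hgB₂)]
    · rintro (rfl | rfl)
      exacts [⟨_, h₁, hB₁, hgB₁⟩, ⟨_, h₂, hB₂, hgB₂⟩]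
  rw [hbands, Set.ncard_pair (bands_ne hP hg h₁₂ h₁ h₂ hB₁ hB₂ hgB₁)]

end StripFold
end

section
/- For a grid polyhedron P, every grid square of P whose normal is perpendicular to the x-axis and which lies in a given x-slab is edge-adjacent to exactly two other grid squares of P whose normal is perpendicular to the x-axis and which lie in the same x-slab; consequently every x-band of P is a simple cycle in the dual graph of P (and analogously for y-bands and z-bands). -/
open scoped Classical

namespace StripFold

/-! A square `s` of `P` in a slab of axis `a` has exactly two sides parallel to `a`. A slab
square edge-adjacent to `s` must share one of these two sides with it, and each of them lies on
exactly one further square of `P`, which is again a slab square. The two squares so obtained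
differ, since a grid square is determined by two of its parallel sides. So the squares of a band
form a finite connected 2-regular graph, i.e. a single cycle. -/

lemma thirdIdx_ne_left : ∀ {i b : Fin 3}, i ≠ b → thirdIdx i b ≠ i := by decide

lemma thirdIdx_ne_right : ∀ {i b : Fin 3}, i ≠ b → thirdIdx i b ≠ b := by decide

lemma eq_thirdIdx : ∀ {i b j : Fin 3}, i ≠ b → j ≠ i → j ≠ b → j = thirdIdx i b := by decide

lemma cell_ext_of_ne {c d : Cell} {i b : Fin 3} (hib : i ≠ b) (hi : c i = d i) (hb : c b = d b)
    (hk : c (thirdIdx i b) = d (thirdIdx i b)) : c = d := by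
  funext j
  by_cases hji : j = i
  · exact hji ▸ hi
  by_cases hjb : j = b
  · exact hjb ▸ hb
  · exact eq_thirdIdx hib hji hjb ▸ hk

lemma mem_edgesOf_iff {c p : Cell} {i b : Fin 3} :
    (p, b) ∈ edgesOf (c, i) ↔ b ≠ i ∧ p i = c i + 1 ∧ p b = c b ∧
      (p (thirdIdx i b) = c (thirdIdx i b) ∨ p (thirdIdx i b) = c (thirdIdx i b) + 1) := by
  constructor
  · rintro ⟨j, k, hji, hki, hjk, rfl, hpi, hpj, hpk⟩
    obtain rfl : k = thirdIdx i b := eq_thirdIdx (Ne.symm hji) hki (Ne.symm hjk)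
    exact ⟨hji, hpi, hpj, hpk⟩
  · rintro ⟨hbi, hpi, hpb, hpk⟩
    exact ⟨b, thirdIdx i b, hbi, thirdIdx_ne_left hbi.symm,
      (thirdIdx_ne_right hbi.symm).symm, rfl, hpi, hpb, hpk⟩

lemma ne_and_eq_of_mem_edgesOf {s : Sq} {p : Cell} {b : Fin 3} (h : (p, b) ∈ edgesOf s) :
    b ≠ s.2 ∧ p b = s.1 b := by
  obtain ⟨hbi, -, hpb, -⟩ := mem_edgesOf_iff.1 h
  exact ⟨hbi, hpb⟩

/-- The sides of the square `(c, i)` parallel to an axis `a ≠ i` start at `c + eᵢ` and at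
`c + eᵢ + eₖ`, `k` the third axis. -/
lemma exists_two_edgesOf_parallel {c : Cell} {i a : Fin 3} (hai : a ≠ i) :
    ∃ p₀ p₁ : Cell, p₀ ≠ p₁ ∧ ∀ p, (p, a) ∈ edgesOf (c, i) ↔ p = p₀ ∨ p = p₁ := by
  have hki : thirdIdx i a ≠ i := thirdIdx_ne_left hai.symm
  have hka : thirdIdx i a ≠ a := thirdIdx_ne_right hai.symm
  refine ⟨c + unitVec i, c + unitVec i + unitVec (thirdIdx i a), fun h => ?_, fun p => ?_⟩
  · simpa [unitVec, hki] using congrFun h (thirdIdx i a)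
  rw [mem_edgesOf_iff]
  constructor
  · rintro ⟨-, hpi, hpa, hpk | hpk⟩
    · exact Or.inl (cell_ext_of_ne hai.symm (by simp [unitVec, hpi])
        (by simp [unitVec, hai, hpa]) (by simp [unitVec, hki, hpk]))
    · exact Or.inr (cell_ext_of_ne hai.symm (by simp [unitVec, hki.symm, hpi])
        (by simp [unitVec, hai, hka.symm, hpa]) (by simp [unitVec, hki, hpk]))
  · rintro (rfl | rfl) <;> simp [unitVec, hai, hki, hka.symm, hki.symm]

lemma eq_of_mem_edgesOf_parallel {s t : Sq} {p p' : Cell} {b : Fin 3} (hpp' : p ≠ p')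
    (hs : (p, b) ∈ edgesOf s) (hs' : (p', b) ∈ edgesOf s)
    (ht : (p, b) ∈ edgesOf t) (ht' : (p', b) ∈ edgesOf t) : s = t := by
  obtain ⟨c, i⟩ := s
  obtain ⟨d, m⟩ := t
  rw [mem_edgesOf_iff] at hs hs' ht ht'
  obtain ⟨hbi, hpi, hpb, hpk⟩ := hs
  obtain ⟨-, hpi', hpb', hpk'⟩ := hs'
  have hk : p (thirdIdx i b) ≠ p' (thirdIdx i b) := fun h =>
    hpp' (cell_ext_of_ne hbi.symm (by omega) (by omega) h)
  obtain ⟨hbm, hqi, hqb, hqk⟩ := ht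
  obtain ⟨-, hqi', hqb', hqk'⟩ := ht'
  obtain rfl | hmi := eq_or_ne m i
  · have hcd : c = d := cell_ext_of_ne hbi.symm (by omega) (by omega) (by omega)
    rw [hcd]
  · obtain rfl : m = thirdIdx i b := eq_thirdIdx hbi.symm hmi hbm.symm
    omega

lemma snd_eq_of_mem_edgesOf_of_slab {s t : Sq} {e : GridEdge} {a : Fin 3} (hst : s ≠ t)
    (hsa : s.2 ≠ a) (hta : t.2 ≠ a) (hx : s.1 a = t.1 a)
    (hs : e ∈ edgesOf s) (ht : e ∈ edgesOf t) : e.2 = a := by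
  obtain ⟨c, i⟩ := s
  obtain ⟨d, m⟩ := t
  obtain ⟨p, b⟩ := e
  dsimp only at hsa hta hx ⊢
  by_contra hba
  rw [mem_edgesOf_iff] at hs ht
  obtain ⟨hbi, hpi, hpb, -⟩ := hs
  obtain ⟨hbm, hqi, hqb, -⟩ := ht
  have hm : m = i := by
    rw [eq_thirdIdx (Ne.symm hba) hsa hbi.symm, eq_thirdIdx (Ne.symm hba) hta hbm.symm]
  subst hm
  have hk : a = thirdIdx m b := eq_thirdIdx hbm.symm (Ne.symm hsa) (Ne.symm hba)
  have hcd : c = d := cell_ext_of_ne hbm.symm (by omega) (by omega) (hk ▸ hx)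
  exact hst (hcd ▸ rfl)

def TwoSquaresAtEachEdge (P : Set Sq) : Prop :=
  ∀ e : GridEdge, (∃ s ∈ P, e ∈ edgesOf s) → { s | s ∈ P ∧ e ∈ edgesOf s }.ncard = 2

lemma TwoSquaresAtEachEdge.exists_unique_other {P : Set Sq} (hP : TwoSquaresAtEachEdge P)
    {s : Sq} {e : GridEdge} (hs : s ∈ P) (he : e ∈ edgesOf s) :
    ∃ t ∈ P, e ∈ edgesOf t ∧ t ≠ s ∧ ∀ t' ∈ P, e ∈ edgesOf t' → t' ≠ s → t' = t := by
  obtain ⟨u, v, huv, huv_eq⟩ := Set.ncard_eq_two.1 (hP e ⟨s, hs, he⟩)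
  have hmem : ∀ t, t ∈ P ∧ e ∈ edgesOf t ↔ t = u ∨ t = v := fun t => by
    simpa using Set.ext_iff.1 huv_eq t
  obtain rfl | rfl := (hmem s).1 ⟨hs, he⟩
  · obtain ⟨hvP, hve⟩ := (hmem v).2 (Or.inr rfl)
    exact ⟨v, hvP, hve, huv.symm, fun t' ht' he' hne => ((hmem t').1 ⟨ht', he'⟩).resolve_left hne⟩
  · obtain ⟨huP, hue⟩ := (hmem u).2 (Or.inl rfl)
    exact ⟨u, huP, hue, huv, fun t' ht' he' hne => ((hmem t').1 ⟨ht', he'⟩).resolve_right hne⟩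

lemma mem_slabSquares_of_mem_edgesOf {P : Set Sq} {t : Sq} {p : Cell} {a : Fin 3} (ht : t ∈ P)
    (he : (p, a) ∈ edgesOf t) : t ∈ slabSquares P a (p a) := by
  obtain ⟨hat, hpa⟩ := ne_and_eq_of_mem_edgesOf he
  exact ⟨ht, hat.symm, hpa.symm⟩

theorem ncard_slabSquares_edgeAdj {P : Set Sq} (hP : TwoSquaresAtEachEdge P) {a : Fin 3} {x : ℤ}
    {s : Sq} (hs : s ∈ slabSquares P a x) :
    {t | t ∈ slabSquares P a x ∧ edgeAdj s t}.ncard = 2 := by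
  obtain ⟨hsP, hsa, rfl⟩ := hs
  obtain ⟨p₀, p₁, hp₀₁, hsides⟩ := exists_two_edgesOf_parallel (c := s.1) hsa.symm
  have hs₀ := (hsides p₀).2 (Or.inl rfl)
  have hs₁ := (hsides p₁).2 (Or.inr rfl)
  obtain ⟨t₀, ht₀P, ht₀, hts₀, huniq₀⟩ := hP.exists_unique_other hsP hs₀
  obtain ⟨t₁, ht₁P, ht₁, hts₁, huniq₁⟩ := hP.exists_unique_other hsP hs₁
  have hslab : ∀ {p t}, t ∈ P → (p, a) ∈ edgesOf s → (p, a) ∈ edgesOf t →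
      t ∈ slabSquares P a (s.1 a) := fun htP hse hte =>
    (ne_and_eq_of_mem_edgesOf hse).2 ▸ mem_slabSquares_of_mem_edgesOf htP hte
  have hneighbors : {t | t ∈ slabSquares P a (s.1 a) ∧ edgeAdj s t} = {t₀, t₁} := by
    ext t
    simp only [Set.mem_ofPred_eq, Set.mem_insert_iff, Set.mem_singleton_iff]
    constructor
    · rintro ⟨htslab, hst, ⟨p, b⟩, hse, hte⟩
      obtain rfl : b = a :=
        snd_eq_of_mem_edgesOf_of_slab hst hsa htslab.2.1 htslab.2.2.symm hse hte
      rcases (hsides p).1 hse with rfl | rfl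
      · exact Or.inl (huniq₀ t htslab.1 hte hst.symm)
      · exact Or.inr (huniq₁ t htslab.1 hte hst.symm)
    · rintro (rfl | rfl)
      · exact ⟨hslab ht₀P hs₀ ht₀, hts₀.symm, _, hs₀, ht₀⟩
      · exact ⟨hslab ht₁P hs₁ ht₁, hts₁.symm, _, hs₁, ht₁⟩
  have ht₀₁ : t₀ ≠ t₁ := fun h =>
    hts₀ (eq_of_mem_edgesOf_parallel hp₀₁ ht₀ (h ▸ ht₁) hs₀ hs₁)
  rw [hneighbors, Set.ncard_pair ht₀₁]

lemma _root_.SimpleGraph.Connected.exists_isCycle_forall_mem_support {V : Type*} [Finite V]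
    {G : SimpleGraph V} (hG : G.Connected) (hdeg : ∀ v, (G.neighborSet v).ncard = 2) :
    ∃ (v : V) (p : G.Walk v v), p.IsCycle ∧ ∀ u, u ∈ p.support := by
  obtain ⟨v⟩ := hG.nonempty
  obtain ⟨p, hp, hverts⟩ :=
    SimpleGraph.IsCycles.exists_cycle_toSubgraph_verts_eq_connectedComponentSupp
      (fun w _ => hdeg w) (c := G.connectedComponentMk v) rfl
      (Set.nonempty_of_ncard_ne_zero (by rw [hdeg v]; norm_num))
  refine ⟨v, p, hp, fun u => ?_⟩
  rw [← SimpleGraph.Walk.mem_verts_toSubgraph, hverts, SimpleGraph.ConnectedComponent.mem_supp_iff,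
    SimpleGraph.ConnectedComponent.eq]
  exact hG.preconnected u v

def dualGraphInclusion {B P : Set Sq} (h : B ⊆ P) : dualGraph B ↪g dualGraph P where
  toEmbedding := Set.embeddingOfSubset B P h
  map_rel_iff' := Iff.rfl

lemma IsCompOf.ncard_neighborSet {B T : Set Sq} (hB : IsCompOf B T) (v : B) :
    ((dualGraph B).neighborSet v).ncard = {t | t ∈ T ∧ edgeAdj v t}.ncard := by
  obtain ⟨-, hBT, -, hclosed⟩ := hB
  rw [← Set.ncard_image_of_injective _ Subtype.val_injective]
  congr 1
  ext t
  constructor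
  · rintro ⟨u, hvu, rfl⟩
    exact ⟨hBT u.2, hvu⟩
  · rintro ⟨htT, hvt⟩
    exact ⟨⟨t, hclosed v v.2 t htT hvt⟩, hvt, rfl⟩

lemma exists_isCycle_dualGraph_support_eq {B P : Set Sq} (hBP : B ⊆ P) (hB : B.Finite)
    (hconn : (dualGraph B).Connected) (hdeg : ∀ v, ((dualGraph B).neighborSet v).ncard = 2) :
    ∃ (u : P) (w : (dualGraph P).Walk u u), w.IsCycle ∧ ∀ y : P, y ∈ w.support ↔ (y : Sq) ∈ B := by
  have := hB.to_subtype
  obtain ⟨v, p, hp, hsupp⟩ := hconn.exists_isCycle_forall_mem_support hdeg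
  let f := dualGraphInclusion hBP
  refine ⟨f v, p.map f.toHom, (SimpleGraph.Walk.isCycle_map_iff_of_injective f.injective).2 hp,
    fun y => ?_⟩
  rw [SimpleGraph.Walk.support_map, List.mem_map]
  exact ⟨fun ⟨b, _, hb⟩ => hb ▸ b.2, fun hy => ⟨⟨y, hy⟩, hsupp _, rfl⟩⟩

/-- Every square of a grid polyhedron `P` lying in a given slab with
normal perpendicular to the slab axis is edge-adjacent to exactly two other such
squares of the same slab; consequently every band of `P` is a simple cycle in the
dual graph of `P`. -/
theorem slab_degree_two_and_bands_are_simple_cycles (C : Set Cell) (P : Set Sq)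
    (hP : IsGridPolyhedron C P) :
    (∀ (a : Fin 3) (x : ℤ), ∀ s ∈ slabSquares P a x,
      {t | t ∈ slabSquares P a x ∧ edgeAdj s t}.ncard = 2) ∧
    (∀ B : Set Sq, IsBand P B → ∃ (u : P) (w : (dualGraph P).Walk u u),
      w.IsCycle ∧ ∀ y : P, y ∈ w.support ↔ (y : Sq) ∈ B) := by
  have hslab (a : Fin 3) (x : ℤ) (s : Sq) (hs : s ∈ slabSquares P a x) :=
    ncard_slabSquares_edgeAdj hP.edgeTwo hs
  refine ⟨hslab, ?_⟩
  rintro B ⟨a, x, hB⟩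
  have hBP : B ⊆ P := fun t ht => (hB.2.1 ht).1
  exact exists_isCycle_dualGraph_support_eq hBP (hP.surface.finite.subset hBP) hB.2.2.1
    fun v => (hB.ncard_neighborSet v).trans (hslab a x v (hB.2.1 v.2))

end StripFold
end

section
/- Every band of a grid polyhedron contains an even number of grid squares. -/
/-!
Let `B` be a band in the slab `x_a ∈ [x, x + 1]`. A square of `B` has exactly two sides
parallel to the `a`-axis, and the base points of these two sides have coordinate sums of
opposite parity, so every square of `B` has exactly one such "even" side. An even side lies on
exactly two squares of `P`; both lie in the slab with normal perpendicular to `a` and are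
edge-adjacent, hence both belong to `B`, and the side is the even side of each. So
"take the even side" is exactly two-to-one on `B`.
-/

open scoped Classical

namespace StripFold

def edgeParity (e : GridEdge) : ZMod 2 := ((∑ j, e.1 j : ℤ) : ZMod 2)

/-- For `a ≠ s.2` and `ε ∈ {0, 1}`, the two sides of the square `s` parallel to the axis `a`. -/
def sideAlong (a : Fin 3) (s : Sq) (ε : ℤ) : GridEdge :=
  (fun j => if j = s.2 then s.1 j + 1 else if j = a then s.1 j else s.1 j + ε, a)

lemma exists_ne_ne : ∀ i a : Fin 3, i ≠ a → ∃ t : Fin 3, t ≠ i ∧ t ≠ a := by decide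

lemma eq_or_eq_or_eq_of_pairwise_ne : ∀ x y z w : Fin 3, x ≠ y → x ≠ z → y ≠ z →
    w = x ∨ w = y ∨ w = z := by decide

lemma sideAlong_mem_edgesOf {a : Fin 3} {s : Sq} (h : a ≠ s.2) {ε : ℤ} (hε : ε = 0 ∨ ε = 1) :
    sideAlong a s ε ∈ edgesOf s := by
  obtain ⟨t, hts, hta⟩ := exists_ne_ne s.2 a h.symm
  refine ⟨a, t, h, hts, hta.symm, rfl, by simp [sideAlong], by simp [sideAlong, h], ?_⟩
  simp only [sideAlong, if_neg hts, if_neg hta]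
  rcases hε with rfl | rfl
  · exact Or.inl (add_zero _)
  · exact Or.inr rfl

lemma edgeParity_sideAlong_one {a : Fin 3} {s : Sq} (h : a ≠ s.2) :
    edgeParity (sideAlong a s 1) = edgeParity (sideAlong a s 0) + 1 := by
  obtain ⟨c, i⟩ := s
  simp only [edgeParity, sideAlong, Fin.sum_univ_three] at *
  fin_cases i <;> fin_cases a <;> simp_all <;> ring

lemma eq_sideAlong_of_mem_edgesOf {s : Sq} {e : GridEdge} (hmem : e ∈ edgesOf s) :
    e = sideAlong e.2 s 0 ∨ e = sideAlong e.2 s 1 := by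
  obtain ⟨j, k, hj, hk, hjk, rfl, h1, h2, h3⟩ := hmem
  have key : ∀ ε : ℤ, e.1 k = s.1 k + ε → e = sideAlong e.2 s ε := by
    intro ε hko
    refine Prod.ext (funext fun w => ?_) rfl
    rcases eq_or_eq_or_eq_of_pairwise_ne s.2 e.2 k w hj.symm hk.symm hjk with rfl | rfl | rfl
    · simpa [sideAlong] using h1
    · simpa [sideAlong, hj] using h2
    · simpa [sideAlong, hk, hjk.symm] using hko
  rcases h3 with h3 | h3
  · exact Or.inl (key 0 (by rw [h3, add_zero]))
  · exact Or.inr (key 1 h3)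

lemma snd_ne_of_mem_edgesOf {s : Sq} {e : GridEdge} (hmem : e ∈ edgesOf s) : e.2 ≠ s.2 := by
  obtain ⟨j, k, hj, -, -, rfl, -⟩ := hmem
  exact hj

lemma fst_apply_snd_of_mem_edgesOf {s : Sq} {e : GridEdge} (hmem : e ∈ edgesOf s) :
    e.1 e.2 = s.1 e.2 := by
  obtain ⟨j, k, -, -, -, rfl, -, h, -⟩ := hmem
  exact h

noncomputable def evenSide (a : Fin 3) (s : Sq) : GridEdge :=
  if edgeParity (sideAlong a s 0) = 0 then sideAlong a s 0 else sideAlong a s 1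

lemma evenSide_mem_edgesOf {a : Fin 3} {s : Sq} (h : a ≠ s.2) : evenSide a s ∈ edgesOf s := by
  unfold evenSide
  split_ifs
  exacts [sideAlong_mem_edgesOf h (Or.inl rfl), sideAlong_mem_edgesOf h (Or.inr rfl)]

lemma evenSide_snd (a : Fin 3) (s : Sq) : (evenSide a s).2 = a := by
  unfold evenSide
  split_ifs <;> rfl

lemma evenSide_eq_of_mem_edgesOf {s : Sq} {e : GridEdge} (hmem : e ∈ edgesOf s)
    (hpar : edgeParity e = 0) : evenSide e.2 s = e := by
  rcases eq_sideAlong_of_mem_edgesOf hmem with he | he <;> rw [he] at hpar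
  · rw [evenSide, if_pos hpar, ← he]
  · rw [evenSide, if_neg, ← he]
    rw [edgeParity_sideAlong_one (snd_ne_of_mem_edgesOf hmem)] at hpar
    intro h0
    rw [h0] at hpar
    exact absurd hpar (by decide)

lemma edgeParity_evenSide {a : Fin 3} {s : Sq} (h : a ≠ s.2) : edgeParity (evenSide a s) = 0 := by
  unfold evenSide
  split_ifs with h0
  · exact h0
  · rw [edgeParity_sideAlong_one h]
    generalize edgeParity (sideAlong a s 0) = p at h0
    revert p; decide

lemma even_ncard_of_ncard_fiber_eq_two {α β : Type*} {s : Set α} (hs : s.Finite)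
    (f : α → β) (h : ∀ x ∈ s, {y | y ∈ s ∧ f y = f x}.ncard = 2) : Even s.ncard := by
  obtain ⟨t, rfl⟩ := hs.exists_finset_coe
  have hfiber : ∀ b ∈ t.image f, (t.filter (f · = b)).card = 2 := by
    rintro _ hb
    obtain ⟨x, hx, rfl⟩ := Finset.mem_image.mp hb
    simpa [← Set.ncard_coe_finset] using h x hx
  rw [Set.ncard_coe_finset, Finset.card_eq_sum_card_image f t, Finset.sum_congr rfl hfiber,
    Finset.sum_const, smul_eq_mul]
  exact even_two.mul_left _

lemma IsCompOf.setOf_evenSide_mem_edgesOf {P B : Set Sq} {a : Fin 3} {x : ℤ}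
    (hB : IsCompOf B (slabSquares P a x)) {s : Sq} (hs : s ∈ B) :
    {u | u ∈ B ∧ evenSide a u = evenSide a s} = {u | u ∈ P ∧ evenSide a s ∈ edgesOf u} := by
  obtain ⟨-, hBslab, -, hBclosed⟩ := hB
  obtain ⟨-, hsa, hsx⟩ := hBslab hs
  ext u
  constructor
  · rintro ⟨huB, hu⟩
    obtain ⟨huP, hua, -⟩ := hBslab huB
    exact ⟨huP, hu ▸ evenSide_mem_edgesOf hua.symm⟩
  · rintro ⟨huP, hue⟩
    have hes := evenSide_mem_edgesOf hsa.symm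
    have ha := evenSide_snd a s
    have hua := snd_ne_of_mem_edgesOf hue
    have hux := fst_apply_snd_of_mem_edgesOf hue
    have hex := fst_apply_snd_of_mem_edgesOf hes
    rw [ha] at hua hux hex
    have huslab : u ∈ slabSquares P a x := ⟨huP, hua.symm, by rw [← hux, hex, hsx]⟩
    refine ⟨?_, ?_⟩
    · by_cases hus : u = s
      · exact hus ▸ hs
      · exact hBclosed s hs u huslab ⟨Ne.symm hus, _, hes, hue⟩
    · simpa [ha] using evenSide_eq_of_mem_edgesOf hue (edgeParity_evenSide hsa.symm)

/-- Every band of a grid polyhedron contains an even number of grid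
squares. -/
theorem band_card_even (C : Set Cell) (P : Set Sq) (hP : IsGridPolyhedron C P)
    (B : Set Sq) (hB : IsBand P B) : Even B.ncard := by
  obtain ⟨a, x, hBcomp⟩ := hB
  refine even_ncard_of_ncard_fiber_eq_two
    (hP.surface.finite.subset fun s hs => (hBcomp.2.1 hs).1) (evenSide a) fun s hs => ?_
  obtain ⟨hsP, hsa, -⟩ := hBcomp.2.1 hs
  rw [hBcomp.setOf_evenSide_mem_edgesOf hs]
  exact hP.edgeTwo _ ⟨s, hsP, evenSide_mem_edgesOf hsa.symm⟩

end StripFold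
end

section
/- For every milling tour of a grid polyhedron P that makes t turns, there exists a band cover of P of size at most t; in particular, the size of a minimum band cover of P is a lower bound on the number of turns in any milling tour of P. -/
open scoped Classical

namespace StripFold

/-! Each visit of a tour enters its square through a side `e`, and the square lies in the
slab perpendicular to `e`. A visit that is not a turn leaves through a side parallel to `e`,
so the next square lies in the same slab and is edge-adjacent to the current one: between
two consecutive turns the tour stays in a single band. Hence the bands entered right after
the turns cover every visited square, that is, all of `P`. A tour without any turn would
stay in one slab, which misses the squares of `P` whose normal is the slab axis. -/

lemma mem_slabSquares_of_mem_edgesOf_s5 {P : Set Sq} {s : Sq} {e : GridEdge} (hs : s ∈ P)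
    (he : e ∈ edgesOf s) : s ∈ slabSquares P e.2 (e.1 e.2) := by
  obtain ⟨j, k, hj, -, -, rfl, -, hsj, -⟩ := he
  exact ⟨hs, fun h => hj h.symm, hsj.symm⟩

lemma exists_mem_boundary_normal_eq {C : Set Cell} (hfin : C.Finite) (hne : C.Nonempty)
    (i : Fin 3) : ∃ s ∈ boundary C, s.2 = i := by
  obtain ⟨c, hc, hmin⟩ := Set.exists_min_image C (fun c => c i) hfin hne
  have hbelow : c - unitVec i ∉ C := fun h => by simpa [unitVec] using hmin _ h
  refine ⟨(c - unitVec i, i), Or.inr ⟨?_, hbelow⟩, rfl⟩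
  simpa using hc

section Components

/-- The connected component of `s` in the dual graph of `T` (empty if `s ∉ T`). -/
def dualComponent (T : Set Sq) (s : Sq) : Set Sq :=
  {u | ∃ (hs : s ∈ T) (hu : u ∈ T), (dualGraph T).Reachable ⟨s, hs⟩ ⟨u, hu⟩}

variable {T : Set Sq} {s : Sq}

lemma mem_dualComponent_self (hs : s ∈ T) : s ∈ dualComponent T s :=
  ⟨hs, hs, .refl _⟩

lemma dualComponent_subset : dualComponent T s ⊆ T := fun _ ⟨_, hu, _⟩ => hu

lemma dualComponent_eq_of_edgeAdj {t : Sq} (hs : s ∈ T) (ht : t ∈ T) (h : edgeAdj s t) :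
    dualComponent T s = dualComponent T t := by
  have hadj : (dualGraph T).Adj ⟨s, hs⟩ ⟨t, ht⟩ := h
  ext u
  exact ⟨fun ⟨_, hu, r⟩ => ⟨ht, hu, hadj.symm.reachable.trans r⟩,
    fun ⟨_, hu, r⟩ => ⟨hs, hu, hadj.reachable.trans r⟩⟩

def induceDualGraphHom (T B : Set Sq) :
    (dualGraph T).induce {x | x.1 ∈ B} →g dualGraph B where
  toFun x := ⟨x.1.1, x.2⟩
  map_rel' h := h

lemma reachable_dualComponent (hs : s ∈ T) {u : Sq} (hu : u ∈ dualComponent T s) :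
    (dualGraph (dualComponent T s)).Reachable ⟨s, mem_dualComponent_self hs⟩ ⟨u, hu⟩ := by
  obtain ⟨_, huT, ⟨p⟩⟩ := hu
  have hsupp : ∀ x ∈ p.support, x ∈ {x : T | x.1 ∈ dualComponent T s} :=
    fun x hx => ⟨hs, x.2, (p.takeUntil x hx).reachable⟩
  exact ((p.induce _ hsupp).map (induceDualGraphHom T _)).reachable

lemma isCompOf_dualComponent (hs : s ∈ T) : IsCompOf (dualComponent T s) T := by
  have hself := mem_dualComponent_self hs
  have : Nonempty (dualComponent T s) := ⟨⟨s, hself⟩⟩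
  refine ⟨⟨s, hself⟩, dualComponent_subset, ⟨?_⟩, ?_⟩
  · rintro ⟨u, hu⟩ ⟨u', hu'⟩
    exact (reachable_dualComponent hs hu).symm.trans (reachable_dualComponent hs hu')
  · rintro u ⟨_, huT, r⟩ t ht hadj
    exact ⟨hs, ht, r.trans (show (dualGraph T).Adj ⟨u, huT⟩ ⟨t, ht⟩ from hadj).reachable⟩

end Components

section Cyclic

variable {α : Type*} {L : ℕ} {p : ℕ → Prop} {b : ℕ → α}

lemma exists_marked_succ_eq_of_cyclic (hb : ∀ k < L, ¬ p k → b ((k + 1) % L) = b k)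
    {k₀ : ℕ} (hk₀ : k₀ < L) (hp : p k₀) {m : ℕ} (hm : m < L) :
    ∃ k < L, p k ∧ b ((k + 1) % L) = b m := by
  have hL : 0 < L := by omega
  have key : ∀ n, ∃ k < L, p k ∧ b ((k + 1) % L) = b ((k₀ + 1 + n) % L) := by
    intro n
    induction n with
    | zero => exact ⟨k₀, hk₀, hp, rfl⟩
    | succ n ih =>
      have hsucc : ((k₀ + 1 + n) % L + 1) % L = (k₀ + 1 + (n + 1)) % L := by
        rw [Nat.mod_add_mod, Nat.add_assoc]
      by_cases hj : p ((k₀ + 1 + n) % L)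
      · exact ⟨_, Nat.mod_lt _ hL, hj, congrArg b hsucc⟩
      · rw [← hsucc, hb _ (Nat.mod_lt _ hL) hj]
        exact ih
  obtain ⟨k, hk, hpk, hbk⟩ := key (m + L - (k₀ + 1))
  refine ⟨k, hk, hpk, ?_⟩
  rw [hbk, show k₀ + 1 + (m + L - (k₀ + 1)) = m + L by omega, Nat.add_mod_right,
    Nat.mod_eq_of_lt hm]

lemma apply_eq_apply_zero_of_cyclic (hb : ∀ k < L, ¬ p k → b ((k + 1) % L) = b k)
    (hnp : ∀ k < L, ¬ p k) {m : ℕ} (hm : m < L) : b m = b 0 := by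
  induction m with
  | zero => rfl
  | succ m ih =>
    rw [← Nat.mod_eq_of_lt hm, hb m (by omega) (hnp m (by omega))]
    exact ih (by omega)

end Cyclic

section Walks

variable {S : Set Sq} {v : S} {w : (dualGraph S).Walk v v}

lemma IsMillingTour.length_pos (hw : IsMillingTour w) (hnormal : ∀ a, ∃ s ∈ S, s.2 = a) :
    0 < w.length := by
  by_contra! h
  have hv : ∀ u : S, u.1 = v.1 := fun u => by
    obtain ⟨n, rfl, hn⟩ := w.mem_support_iff_exists_getVert.1 (hw u)
    rw [show n = 0 by omega, SimpleGraph.Walk.getVert_zero]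
  obtain ⟨s₀, hs₀, h₀⟩ := hnormal 0
  obtain ⟨s₁, hs₁, h₁⟩ := hnormal 1
  have hs : s₀ = s₁ := (hv ⟨s₀, hs₀⟩).trans (hv ⟨s₁, hs₁⟩).symm
  exact absurd (h₀.symm.trans (hs ▸ h₁)) (by decide)

lemma IsMillingTour.exists_squareAt_eq (hw : IsMillingTour w) (hL : 0 < w.length) {g : Sq}
    (hg : g ∈ S) : ∃ m < w.length, squareAt w m = g := by
  obtain ⟨n, hn, hnL⟩ := w.mem_support_iff_exists_getVert.1 (hw ⟨g, hg⟩)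
  rcases hnL.lt_or_eq with hlt | rfl
  · exact ⟨n, hlt, by rw [squareAt, hn]⟩
  · refine ⟨0, hL, ?_⟩
    rw [SimpleGraph.Walk.getVert_length] at hn
    rw [squareAt, SimpleGraph.Walk.getVert_zero, hn]

lemma nextIdx_lt (hL : 0 < w.length) (k : ℕ) : nextIdx w k < w.length := Nat.mod_lt _ hL

lemma prevIdx_lt (hL : 0 < w.length) (k : ℕ) : prevIdx w k < w.length := Nat.mod_lt _ hL

lemma nextIdx_prevIdx (hL : 0 < w.length) {k : ℕ} (hk : k < w.length) :
    nextIdx w (prevIdx w k) = k := by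
  rw [nextIdx, prevIdx, Nat.mod_add_mod, show k + w.length - 1 + 1 = k + w.length by omega,
    Nat.add_mod_right, Nat.mod_eq_of_lt hk]

lemma prevIdx_nextIdx {k : ℕ} (hk : k < w.length) : prevIdx w (nextIdx w k) = k := by
  rw [nextIdx, prevIdx, show (k + 1) % w.length + w.length - 1
      = (k + 1) % w.length + (w.length - 1) by omega, Nat.mod_add_mod,
    show k + 1 + (w.length - 1) = k + w.length by omega, Nat.add_mod_right, Nat.mod_eq_of_lt hk]

lemma edgeAdj_squareAt_nextIdx {k : ℕ} (hk : k < w.length) :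
    edgeAdj (squareAt w k) (squareAt w (nextIdx w k)) := by
  have hstep := w.adj_getVert_succ hk
  rcases (show k + 1 ≤ w.length from hk).lt_or_eq with hlt | heq
  · rwa [squareAt, squareAt, nextIdx, Nat.mod_eq_of_lt hlt]
  · rw [heq, SimpleGraph.Walk.getVert_length] at hstep
    rwa [squareAt, squareAt, nextIdx, heq, Nat.mod_self, SimpleGraph.Walk.getVert_zero]

lemma exists_enterSide (hL : 0 < w.length) {m : ℕ} (hm : m < w.length) :
    ∃ e, EnterSide w m e := by
  have h := edgeAdj_squareAt_nextIdx (prevIdx_lt hL m)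
  rw [nextIdx_prevIdx hL hm] at h
  exact h.2

variable (w) in
/-- A side through which the visit at `m` enters its square; the fallback is only reached
for the empty walk. -/
noncomputable def enterEdge (m : ℕ) : GridEdge :=
  if h : ∃ e, EnterSide w m e then h.choose else (0, 0)

lemma enterSide_enterEdge (hL : 0 < w.length) {m : ℕ} (hm : m < w.length) :
    EnterSide w m (enterEdge w m) := by
  have h := exists_enterSide hL hm
  rw [enterEdge, dif_pos h]
  exact h.choose_spec

variable (w) in
/-- Axis and position of the slab perpendicular to the entering side of the visit at `m`. -/
noncomputable def slabAt (m : ℕ) : Fin 3 × ℤ :=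
  ((enterEdge w m).2, (enterEdge w m).1 (enterEdge w m).2)

variable (w) in
noncomputable def bandAt (m : ℕ) : Set Sq :=
  dualComponent (slabSquares S (slabAt w m).1 (slabAt w m).2) (squareAt w m)

lemma squareAt_mem_slabSquares (hL : 0 < w.length) {m : ℕ} (hm : m < w.length) :
    squareAt w m ∈ slabSquares S (slabAt w m).1 (slabAt w m).2 :=
  mem_slabSquares_of_mem_edgesOf_s5 (w.getVert m).2 (enterSide_enterEdge hL hm).2

lemma squareAt_mem_bandAt (hL : 0 < w.length) {m : ℕ} (hm : m < w.length) :
    squareAt w m ∈ bandAt w m :=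
  mem_dualComponent_self (squareAt_mem_slabSquares hL hm)

lemma isBand_bandAt (hL : 0 < w.length) {m : ℕ} (hm : m < w.length) : IsBand S (bandAt w m) :=
  ⟨_, _, isCompOf_dualComponent (squareAt_mem_slabSquares hL hm)⟩

lemma slabAt_nextIdx (hL : 0 < w.length) {m : ℕ} (hm : m < w.length) (hm' : ¬ TurnVisit w m) :
    slabAt w (nextIdx w m) = slabAt w m := by
  have henter := enterSide_enterEdge hL hm
  have hexit : ExitSide w m (enterEdge w (nextIdx w m)) := by
    have h := enterSide_enterEdge hL (nextIdx_lt hL m)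
    rwa [EnterSide, prevIdx_nextIdx hm] at h
  have haxis : (enterEdge w (nextIdx w m)).2 = (enterEdge w m).2 := by
    by_contra hne
    exact hm' ⟨_, _, henter, hexit, Ne.symm hne⟩
  -- parallel sides of one square are at the same position along their axis
  have h₁ := (mem_slabSquares_of_mem_edgesOf_s5 ((w.getVert m).2) henter.2).2.2
  have h₂ := (mem_slabSquares_of_mem_edgesOf_s5 ((w.getVert m).2) hexit.1).2.2
  rw [haxis] at h₂
  exact Prod.ext haxis (by simp only [slabAt, haxis, ← h₁, ← h₂])

lemma bandAt_nextIdx (hL : 0 < w.length) {m : ℕ} (hm : m < w.length) (hm' : ¬ TurnVisit w m) :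
    bandAt w (nextIdx w m) = bandAt w m := by
  have hslab := slabAt_nextIdx hL hm hm'
  have hnext := squareAt_mem_slabSquares hL (nextIdx_lt hL m)
  rw [hslab] at hnext
  rw [bandAt, bandAt, hslab]
  exact dualComponent_eq_of_edgeAdj hnext (squareAt_mem_slabSquares hL hm)
    (edgeAdj_symm (edgeAdj_squareAt_nextIdx hm))

lemma IsMillingTour.exists_turnVisit (hw : IsMillingTour w) (hL : 0 < w.length)
    (hnormal : ∀ a, ∃ s ∈ S, s.2 = a) : ∃ k < w.length, TurnVisit w k := by
  by_contra! hno
  have hconst : ∀ m < w.length, slabAt w m = slabAt w 0 := fun m hm =>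
    apply_eq_apply_zero_of_cyclic (fun k hk hk' => slabAt_nextIdx hL hk hk') hno hm
  obtain ⟨s, hs, hsa⟩ := hnormal (slabAt w 0).1
  obtain ⟨m, hm, rfl⟩ := hw.exists_squareAt_eq hL hs
  have hoff := (squareAt_mem_slabSquares hL hm).2.1
  rw [hconst m hm] at hoff
  exact hoff hsa

lemma IsMillingTour.exists_turnVisit_bandAt_eq (hw : IsMillingTour w) (hL : 0 < w.length)
    (hnormal : ∀ a, ∃ s ∈ S, s.2 = a) {m : ℕ} (hm : m < w.length) :
    ∃ k < w.length, TurnVisit w k ∧ bandAt w (nextIdx w k) = bandAt w m := by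
  obtain ⟨k₀, hk₀, hturn⟩ := hw.exists_turnVisit hL hnormal
  exact exists_marked_succ_eq_of_cyclic (fun k hk hk' => bandAt_nextIdx hL hk hk') hk₀ hturn hm

end Walks

/-- For every milling tour of a grid polyhedron `P` making `t` turns
there is a band cover of `P` of size at most `t` (so the minimum band cover size is a
lower bound on the number of turns of any milling tour). -/
theorem band_cover_of_milling_tour (C : Set Cell) (P : Set Sq)
    (hP : IsGridPolyhedron C P) {v : P} (w : (dualGraph P).Walk v v)
    (hw : IsMillingTour w) (t : ℕ) (ht : turnCount w = t) :
    ∃ S : Set (Set Sq), IsBandCover P S ∧ S.ncard ≤ t := by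
  have hnormal : ∀ a, ∃ s ∈ P, s.2 = a := fun a => by
    simpa only [hP.bdry] using exists_mem_boundary_normal_eq hP.finC hP.neC a
  have hL : 0 < w.length := hw.length_pos hnormal
  set turns := {k | k < w.length ∧ TurnVisit w k}
  have hturns : turns.Finite := (Set.finite_Iio w.length).subset fun k hk => hk.1
  refine ⟨(fun k => bandAt w (nextIdx w k)) '' turns, ⟨?_, fun g hg => ?_⟩, ?_⟩
  · rintro _ ⟨k, -, rfl⟩
    exact isBand_bandAt hL (nextIdx_lt hL k)
  · obtain ⟨m, hm, rfl⟩ := hw.exists_squareAt_eq hL hg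
    obtain ⟨k, hk, hturn, hband⟩ := hw.exists_turnVisit_bandAt_eq hL hnormal hm
    exact ⟨bandAt w (nextIdx w k), ⟨k, ⟨hk, hturn⟩, rfl⟩, hband ▸ squareAt_mem_bandAt hL hm⟩
  · calc _ ≤ turns.ncard := Set.ncard_image_le hturns
      _ ≤ turnCount w := Set.ncard_le_ncard (fun k hk => ⟨hk.1, Or.inl hk.2⟩)
          ((Set.finite_Iio w.length).subset fun k hk => hk.1)
      _ = t := ht

end StripFold
end

section
/- If S is a band cover of a grid polyhedron P, then the graph with vertex set S and an edge between two bands of S whenever they overlap or are adjacent is connected. -/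
open scoped Classical

namespace StripFold

/-- The graph on a set `S` of bands joining two distinct bands whenever they overlap
or are adjacent. -/
def coverGraph (S : Set (Set Sq)) : SimpleGraph S where
  Adj B B' := B ≠ B' ∧ (Overlaps B.1 B'.1 ∨ BandAdjacent B.1 B'.1)
  symm := by
    constructor
    rintro B B' ⟨hne, h⟩
    refine ⟨hne.symm, ?_⟩
    rcases h with ⟨hne', hov⟩ | ⟨hno, g, hg, g', hg', hadj⟩
    · exact Or.inl ⟨hne'.symm, by rw [Set.inter_comm]; exact hov⟩
    · exact Or.inr ⟨fun ⟨a, b⟩ => hno ⟨a.symm, by rw [Set.inter_comm]; exact b⟩,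
        g', hg', g, hg, edgeAdj_symm hadj⟩
  loopless := ⟨fun _ h => h.1 rfl⟩

/-! Bands of `S` containing equal or edge-adjacent squares are equal, overlap or are adjacent.
Since the bands cover `P`, a path in the dual graph of `P` from a square of `B` to a square of
`B'` thus lifts, square by square, to a path from `B` to `B'` in the cover graph. -/

lemma IsBand.subset {P B : Set Sq} (h : IsBand P B) : B ⊆ P := by
  obtain ⟨_, _, _, hBT, _⟩ := h
  exact fun g hg => (hBT hg).1

lemma IsBand.nonempty {P B : Set Sq} (h : IsBand P B) : B.Nonempty := by
  obtain ⟨_, _, hB, _⟩ := h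
  exact hB

section CoverGraph

variable {S : Set (Set Sq)}

lemma coverGraph_reachable_of_inter_nonempty {B B' : S} (h : (B.1 ∩ B'.1).Nonempty) :
    (coverGraph S).Reachable B B' := by
  by_cases hBB : B = B'
  · exact hBB ▸ .refl B
  · exact SimpleGraph.Adj.reachable ⟨hBB, .inl ⟨fun h' => hBB (Subtype.ext h'), h⟩⟩

lemma coverGraph_reachable_of_edgeAdj {B B' : S} {g g' : Sq} (hg : g ∈ B.1) (hg' : g' ∈ B'.1)
    (h : edgeAdj g g') : (coverGraph S).Reachable B B' := by
  by_cases hov : (B.1 ∩ B'.1).Nonempty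
  · exact coverGraph_reachable_of_inter_nonempty hov
  · have hBB : B ≠ B' := fun e => hov ⟨g, hg, e ▸ hg⟩
    exact SimpleGraph.Adj.reachable ⟨hBB, .inr ⟨fun hov' => hov hov'.2, g, hg, g', hg', h⟩⟩

lemma coverGraph_reachable_of_dualGraph_reachable {P : Set Sq}
    (hcov : ∀ g ∈ P, ∃ B ∈ S, g ∈ B) {u u' : P} (h : (dualGraph P).Reachable u u')
    {B B' : S} (hB : u.1 ∈ B.1) (hB' : u'.1 ∈ B'.1) : (coverGraph S).Reachable B B' := by
  obtain ⟨w⟩ := h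
  induction w generalizing B with
  | nil => exact coverGraph_reachable_of_inter_nonempty ⟨_, hB, hB'⟩
  | @cons _ b _ hadj _ ih =>
    obtain ⟨B₁, hB₁S, hb⟩ := hcov b.1 b.2
    exact (coverGraph_reachable_of_edgeAdj (B' := ⟨B₁, hB₁S⟩) hB hb hadj).trans (ih hb hB')

end CoverGraph

/-- If `S` is a band cover of a grid polyhedron `P`, then the graph with
vertex set `S` and an edge between two bands of `S` whenever they overlap or are
adjacent is connected. -/
theorem cover_graph_connected (C : Set Cell) (P : Set Sq)
    (hP : IsGridPolyhedron C P) (S : Set (Set Sq)) (hS : IsBandCover P S) :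
    (coverGraph S).Connected := by
  obtain ⟨hband, hcov⟩ := hS
  have : Nonempty S := by
    obtain ⟨g, hg⟩ := hP.surface.nonempty
    obtain ⟨B, hBS, -⟩ := hcov g hg
    exact ⟨⟨B, hBS⟩⟩
  refine ⟨fun B B' => ?_⟩
  obtain ⟨g, hg⟩ := (hband B B.2).nonempty
  obtain ⟨g', hg'⟩ := (hband B' B'.2).nonempty
  exact coverGraph_reachable_of_dualGraph_reachable hcov
    (hP.surface.connected ⟨g, (hband B B.2).subset hg⟩ ⟨g', (hband B' B'.2).subset hg'⟩) hg hg'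

end StripFold
end
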